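/- arXiv:2603.12913 — 6 statements merged into one kernel-verified Lean document; each statement's English description precedes it below -/
import Mathlib

section
/- In the RRNG on a finite attributed metric dataset, for any two distinct nodes x and y, beam search (greedy search always expanding the unexpanded visited node closest to the target y) starting from an arbitrary entry node terminates at y, i.e., the target node y is reached. -/
def DistinctDistances {V : Type*} (δ : V → V → ℝ) : Prop :=
  ∀ x y z w : V, x ≠ y → z ≠ w → δ x y = δ z w → (x = z ∧ y = w) ∨ (x = w ∧ y = z)

def PrunesWitness {V : Type*} (δ : V → V → ℝ) (a : V → ℝ) (E : V → V → Prop)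
    (x y z : V) : Prop :=
  E x z ∧ δ x z < δ x y ∧ δ y z < δ x y ∧ a x < a z ∧ a z < a y

def IsRRNG {V : Type*} (δ : V → V → ℝ) (a : V → ℝ) (E : V → V → Prop) : Prop :=
  (∀ x y, E x y ↔ E y x) ∧
  ∀ x y, a x < a y → (E x y ↔ ¬ ∃ z, PrunesWitness δ a E x y z)

/-- One step of (unbounded) beam search toward target `y`: expand an
unexpanded visited node `u` closest to `y`, marking it expanded and adding all
its neighbors to the visited set.  The state is `(visited, expanded)`. -/
def BeamStep {V : Type*} [MetricSpace V] (E : V → V → Prop) (y : V)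
    (p q : Set V × Set V) : Prop :=
  ∃ u ∈ p.1 \ p.2, (∀ w ∈ p.1 \ p.2, dist u y ≤ dist w y) ∧
    q = (p.1 ∪ {z | E u z}, insert u p.2)

/-! The pruning rule keeps the edge between `u` and `v` unless the endpoint with the smaller
attribute has a neighbour `z` strictly closer than `dist u v` to both endpoints; inducting on
distance, every pair is joined by a path, so the RRNG is connected. Beam search with an unbounded
candidate set never discards a node: once no unexpanded visited node is left, the visited set is
closed under adjacency, hence contains the component of the entry node, i.e. all of `V`. -/

open Relation

theorem Relation.reflTransGen_of_rel_or_shorter_detour {V : Type*} [Finite V]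
    (d : V → V → ℝ) (r : V → V → Prop)
    (h : ∀ u v, u ≠ v → r u v ∨ ∃ z, d u z < d u v ∧ d z v < d u v) (u v : V) :
    ReflTransGen r u v := by
  let shorter : V × V → V × V → Prop := fun p q => d p.1 p.2 < d q.1 q.2
  have : IsTrans (V × V) shorter := ⟨fun _ _ _ => lt_trans⟩
  have : Std.Irrefl shorter := ⟨fun _ => lt_irrefl _⟩
  refine (Finite.wellFounded_of_trans_of_irrefl shorter).induction
    (C := fun q => ReflTransGen r q.1 q.2) (u, v) ?_
  rintro ⟨u, v⟩ ih
  by_cases huv : u = v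
  · subst huv
    exact .refl
  rcases h u v huv with huv | ⟨z, huz, hzv⟩
  · exact .single huv
  · exact (ih (u, z) huz).trans (ih (z, v) hzv)

namespace IsRRNG

variable {V : Type*} [MetricSpace V] {a : V → ℝ} {E : V → V → Prop}

theorem rel_or_shorter_detour (ha : Function.Injective a)
    (hE : IsRRNG (fun x y : V => dist x y) a E) (u v : V) (huv : u ≠ v) :
    E u v ∨ ∃ z, dist u z < dist u v ∧ dist z v < dist u v := by
  wlog hlt : a u < a v generalizing u v
  · have hvu : a v < a u := (not_lt.mp hlt).lt_of_ne (ha.ne huv.symm)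
    rcases this v u huv.symm hvu with hE' | ⟨z, hvz, hzu⟩
    · exact .inl ((hE.1 v u).mp hE')
    · refine .inr ⟨z, ?_, ?_⟩
      · rwa [dist_comm u z, dist_comm u v]
      · rwa [dist_comm z v, dist_comm u v]
  by_cases hE' : E u v
  · exact .inl hE'
  · obtain ⟨z, -, huz, hvz, -, -⟩ := not_not.mp (mt (hE.2 u v hlt).mpr hE')
    exact .inr ⟨z, huz, by rwa [dist_comm z v]⟩

theorem reflTransGen [Finite V] (ha : Function.Injective a)
    (hE : IsRRNG (fun x y : V => dist x y) a E) (u v : V) : ReflTransGen E u v :=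
  reflTransGen_of_rel_or_shorter_detour (fun x y : V => dist x y) E
    (hE.rel_or_shorter_detour ha) u v

end IsRRNG

section BeamSearch

variable {V : Type*} [MetricSpace V] {E : V → V → Prop} {y : V}

def ExpandedNeighborsVisited (E : V → V → Prop) (p : Set V × Set V) : Prop :=
  ∀ u ∈ p.2, ∀ z, E u z → z ∈ p.1

namespace BeamStep

variable {p q : Set V × Set V}

theorem fst_subset (h : BeamStep E y p q) : p.1 ⊆ q.1 := by
  obtain ⟨u, -, -, rfl⟩ := h
  exact Set.subset_union_left

theorem expandedNeighborsVisited (h : BeamStep E y p q)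
    (hp : ExpandedNeighborsVisited E p) : ExpandedNeighborsVisited E q := by
  obtain ⟨u, -, -, rfl⟩ := h
  rintro w (rfl | hw) z hz
  · exact .inr hz
  · exact .inl (hp w hw z hz)

theorem ncard_snd [Finite V] (h : BeamStep E y p q) : q.2.ncard = p.2.ncard + 1 := by
  obtain ⟨u, hu, -, rfl⟩ := h
  exact Set.ncard_insert_of_notMem hu.2

end BeamStep

theorem exists_beamStep [Finite V] {p : Set V × Set V} (hp : (p.1 \ p.2).Nonempty) :
    ∃ q, BeamStep E y p q := by
  obtain ⟨u, hu, hmin⟩ := Set.exists_min_image _ (fun w => dist w y) (Set.toFinite _) hp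
  exact ⟨_, u, hu, hmin, rfl⟩

theorem mem_fst_of_not_beamStep [Finite V] {p : Set V × Set V} {e v : V}
    (hstop : ¬ ∃ q, BeamStep E y p q) (hp : ExpandedNeighborsVisited E p) (he : e ∈ p.1)
    (hev : ReflTransGen E e v) : v ∈ p.1 := by
  induction hev with
  | refl => exact he
  | tail _ hwz ih =>
    by_contra hz
    refine hstop (exists_beamStep ⟨_, ih, fun hw => hz ?_⟩)
    exact hp _ hw _ hwz

variable {p : ℕ → Set V × Set V}
  (hstep : ∀ n, (∃ q, BeamStep E y (p n) q) → BeamStep E y (p n) (p (n + 1)))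

include hstep in
theorem exists_not_beamStep [Finite V] : ∃ n, ¬ ∃ q, BeamStep E y (p n) q := by
  by_contra! hrun
  have hcard : ∀ n, n ≤ (p n).2.ncard := by
    intro n
    induction n with
    | zero => exact Nat.zero_le _
    | succ n ih => rw [(hstep n (hrun n)).ncard_snd]; omega
  have := hcard (Nat.card V + 1)
  have := Set.ncard_le_card (p (Nat.card V + 1)).2
  omega

variable (hstuck : ∀ n, ¬ (∃ q, BeamStep E y (p n) q) → p (n + 1) = p n)

include hstep hstuck in
theorem beamStep_or_eq (n : ℕ) : BeamStep E y (p n) (p (n + 1)) ∨ p (n + 1) = p n := by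
  by_cases h : ∃ q, BeamStep E y (p n) q
  · exact .inl (hstep n h)
  · exact .inr (hstuck n h)

include hstep hstuck in
theorem mem_fst_of_mem_fst_zero {e : V} (he : e ∈ (p 0).1) (n : ℕ) : e ∈ (p n).1 := by
  induction n with
  | zero => exact he
  | succ n ih =>
    rcases beamStep_or_eq hstep hstuck n with h | h
    · exact h.fst_subset ih
    · rwa [h]

include hstep hstuck in
theorem expandedNeighborsVisited_of_snd_zero (h0 : (p 0).2 = ∅) (n : ℕ) :
    ExpandedNeighborsVisited E (p n) := by
  induction n with
  | zero => simp [ExpandedNeighborsVisited, h0]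
  | succ n ih =>
    rcases beamStep_or_eq hstep hstuck n with h | h
    · exact h.expandedNeighborsVisited ih
    · rwa [h]

end BeamSearch

theorem rrng_beam_search_reaches_target_general {V : Type*} [MetricSpace V] [Fintype V]
    (a : V → ℝ) (ha : Function.Injective a)
    (E : V → V → Prop) (hE : IsRRNG (fun x y : V => dist x y) a E)
    (x y : V) (e : V)
    (p : ℕ → Set V × Set V) (h0 : p 0 = ({e}, ∅))
    (hstep : ∀ n, (∃ q, BeamStep E y (p n) q) → BeamStep E y (p n) (p (n + 1)))
    (hstuck : ∀ n, ¬ (∃ q, BeamStep E y (p n) q) → p (n + 1) = p n) :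
    ∃ n, y ∈ (p n).1 := by
  obtain ⟨n, hn⟩ := exists_not_beamStep hstep
  refine ⟨n, mem_fst_of_not_beamStep hn ?_ ?_ (hE.reflTransGen ha e y)⟩
  · exact expandedNeighborsVisited_of_snd_zero hstep hstuck (by rw [h0]) n
  · exact mem_fst_of_mem_fst_zero hstep hstuck (by rw [h0]; rfl) n

/-- Beam search on the RRNG reaches the target `y` from an arbitrary entry
node `e`: along any run of the greedy expansion process, `y` is eventually
visited. -/
theorem rrng_beam_search_reaches_target {V : Type*} [MetricSpace V] [Fintype V]
    (a : V → ℝ) (ha : Function.Injective a)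
    (hδ : DistinctDistances (fun x y : V => dist x y))
    (E : V → V → Prop) (hE : IsRRNG (fun x y : V => dist x y) a E)
    (x y : V) (hxy : x ≠ y) (e : V)
    (p : ℕ → Set V × Set V) (h0 : p 0 = ({e}, ∅))
    (hstep : ∀ n, (∃ q, BeamStep E y (p n) q) → BeamStep E y (p n) (p (n + 1)))
    (hstuck : ∀ n, ¬ (∃ q, BeamStep E y (p n) q) → p (n + 1) = p n) :
    ∃ n, y ∈ (p n).1 :=
  rrng_beam_search_reaches_target_general a ha E hE x y e p h0 hstep hstuck
end

section
/- Let V = {v₁, …, vₙ} be sorted in strictly ascending order of attribute. In the RNSG construction (where each node's candidate set includes all nodes within attribute-rank distance ef_attribute ≥ 1, and the range-aware pruning is applied per side), for every i < n the edge (v_i, v_{i+1}) is retained, and consequently the RNSG, as well as every subgraph induced by a contiguous attribute range, is strongly connected. -/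
/-- Strong connectivity of the RNSG and of every contiguous-range induced
subgraph.  The nodes `p 0, …, p (n-1)` are sorted in strictly ascending order
of attribute (identified with their index).  The candidate set `C i` contains
every node within attribute-rank distance `ef ≥ 1`, and `K i j` records that
`j` is kept in the neighbor set of `i` under the per-side range-aware pruning
(a candidate is kept iff it is a candidate and no kept node with index strictly
between them on the same side forms a triangle in which `(i,j)` is the longest
edge).  Then every consecutive edge `(vᵢ, vᵢ₊₁)` is retained in both
directions, and every subgraph induced by a contiguous index range is strongly
connected. -/
theorem rnsg_strong_connectivity {V : Type*} [MetricSpace V]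
    (n : ℕ) (p : Fin n → V) (ef : ℕ) (hef : 1 ≤ ef)
    (C : Fin n → Set (Fin n))
    (hC : ∀ i j : Fin n, i ≠ j → ((i : ℤ) - (j : ℤ)).natAbs ≤ ef → j ∈ C i)
    (K : Fin n → Fin n → Prop)
    (hK : ∀ i j : Fin n, j ≠ i →
      (K i j ↔ j ∈ C i ∧ ¬ ∃ k : Fin n, K i k ∧
        ((j < k ∧ k < i) ∨ (i < k ∧ k < j)) ∧
        dist (p i) (p k) < dist (p i) (p j) ∧
        dist (p j) (p k) < dist (p i) (p j))) :
    (∀ i j : Fin n, (i : ℕ) + 1 = (j : ℕ) → K i j ∧ K j i) ∧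
    (∀ l r i j : Fin n, l ≤ i → i ≤ r → l ≤ j → j ≤ r →
      ∃ (m : ℕ) (f : ℕ → Fin n), f 0 = i ∧ f m = j ∧
        (∀ t ≤ m, l ≤ f t ∧ f t ≤ r) ∧
        (∀ t < m, K (f t) (f (t + 1)) ∨ K (f (t + 1)) (f t))) := by
  have step : ∀ i j : Fin n, (i : ℕ) + 1 = (j : ℕ) → K i j ∧ K j i := by
    intro i j hij
    have hne : j ≠ i := by
      intro h; rw [h] at hij; omega
    have hne' : i ≠ j := fun h => hne h.symm
    have hnat : ((i : ℤ) - (j : ℤ)).natAbs ≤ ef ∧ ((j : ℤ) - (i : ℤ)).natAbs ≤ ef := by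
      constructor <;> omega
    constructor
    · rw [hK i j hne]
      refine ⟨hC i j hne' hnat.1, ?_⟩
      rintro ⟨k, _, (⟨h1, h2⟩ | ⟨h1, h2⟩), _, _⟩
      · have := h1.trans h2
        simp only [Fin.lt_def] at this
        omega
      · simp only [Fin.lt_def] at h1 h2
        omega
    · rw [hK j i hne']
      refine ⟨hC j i hne hnat.2, ?_⟩
      rintro ⟨k, _, (⟨h1, h2⟩ | ⟨h1, h2⟩), _, _⟩
      · simp only [Fin.lt_def] at h1 h2
        omega
      · have := h1.trans h2
        simp only [Fin.lt_def] at this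
        omega
  refine ⟨step, ?_⟩
  intro l r i j hli hir hlj hjr
  rcases le_or_gt (i : ℕ) (j : ℕ) with h | h
  · refine ⟨(j : ℕ) - (i : ℕ), fun t => ⟨min ((i : ℕ) + t) (j : ℕ), by omega⟩, ?_, ?_, ?_, ?_⟩
    · ext; simp; omega
    · ext; simp; omega
    · intro t ht
      simp only [Fin.le_def] at *
      constructor <;> simp <;> omega
    · intro t ht
      left
      have h1 : (i : ℕ) + t < (j : ℕ) := by omega
      exact (step _ _ (by simp; omega)).1
  · refine ⟨(i : ℕ) - (j : ℕ), fun t => ⟨max ((i : ℕ) - t) (j : ℕ), by omega⟩, ?_, ?_, ?_, ?_⟩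
    · ext; simp; omega
    · ext; simp; omega
    · intro t ht
      simp only [Fin.le_def] at *
      constructor <;> simp <;> omega
    · intro t ht
      right
      exact (step _ _ (by simp; omega)).1
end

section
/- With the entry-node stack invariant above, for any range [l, r] the entry node (the index j ∈ [l, r] minimizing d_j, ties broken by smallest index) equals the smallest element of the stack q_r (the stack state after processing r) that is ≥ l. -/
open scoped Classical

noncomputable def entryStack (d : ℕ → ℝ) : ℕ → List ℕ
  | 0 => [0]
  | i + 1 => (i + 1) :: (entryStack d i).dropWhile (fun j => decide (d i.succ < d j))

/-! The stack `q_r` holds exactly the suffix minima of `d` up to `r`: pushing `r + 1` pops the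
indices `j` with `d j > d (r + 1)`, which are precisely the suffix minima up to `r` that stop being
suffix minima up to `r + 1`. Given that, the minimum `j` over `[l, r]` is a suffix minimum, and any
stack element `j' ∈ [l, j)` would be a suffix minimum with `d j' ≤ d j ≤ d j'`, so `j' = j` by
injectivity. -/

namespace List

variable {α : Type*}

theorem mem_dropWhile_of_mem {p : α → Bool} {l : List α} {x : α} (hx : x ∈ l)
    (hpx : p x = false) : x ∈ l.dropWhile p := by
  rw [← takeWhile_append_dropWhile (p := p) (l := l), mem_append] at hx
  exact hx.resolve_left fun h => by simp [mem_takeWhile_imp h] at hpx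

theorem Pairwise.exists_rel_of_mem_dropWhile {R : α → α → Prop} {p : α → Bool} {l : List α}
    {x : α} (hl : l.Pairwise R) (hx : x ∈ l.dropWhile p) :
    ∃ y ∈ l, p y = false ∧ (y = x ∨ R y x) := by
  have hne : l.dropWhile p ≠ [] := ne_nil_of_mem hx
  have hsub : (l.dropWhile p).Sublist l := (dropWhile_suffix p).sublist
  refine ⟨_, hsub.subset (head_mem hne), head_dropWhile_not p hne, ?_⟩
  have hpw := hl.sublist hsub
  rw [← cons_head_tail hne] at hx hpw
  rcases mem_cons.1 hx with rfl | hx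
  · exact .inl rfl
  · exact .inr (rel_of_pairwise_cons hpw hx)

end List

def IsSuffixMin (d : ℕ → ℝ) (j r : ℕ) : Prop :=
  j ≤ r ∧ ∀ k, j ≤ k → k ≤ r → d j ≤ d k

theorem isSuffixMin_succ_iff {d : ℕ → ℝ} {j r : ℕ} :
    IsSuffixMin d j (r + 1) ↔ j = r + 1 ∨ (IsSuffixMin d j r ∧ d j ≤ d (r + 1)) := by
  constructor
  · rintro ⟨hjr, hmin⟩
    rcases Nat.lt_or_eq_of_le hjr with hlt | rfl
    · exact .inr ⟨⟨by omega, fun k hjk hkr => hmin k hjk (by omega)⟩, hmin _ hlt.le le_rfl⟩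
    · exact .inl rfl
  · rintro (rfl | ⟨⟨hjr, hmin⟩, hlast⟩)
    · exact ⟨le_rfl, fun k hjk hkr => by rw [le_antisymm hkr hjk]⟩
    · refine ⟨by omega, fun k hjk hkr => ?_⟩
      rcases Nat.lt_or_eq_of_le hkr with hlt | rfl
      · exact hmin k hjk (by omega)
      · exact hlast

variable {d : ℕ → ℝ}

theorem le_of_mem_entryStack {j : ℕ} : ∀ {r : ℕ}, j ∈ entryStack d r → j ≤ r
  | 0, h => by simpa [entryStack] using h
  | r + 1, h => by
    rcases List.mem_cons.1 h with rfl | h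
    · exact le_rfl
    · exact (le_of_mem_entryStack ((List.dropWhile_suffix _).subset h)).trans r.le_succ

theorem entryStack_pairwise_gt : ∀ r : ℕ, (entryStack d r).Pairwise (· > ·)
  | 0 => List.pairwise_singleton _ _
  | r + 1 => List.pairwise_cons.2
      ⟨fun _ hj => Nat.lt_succ_of_le (le_of_mem_entryStack ((List.dropWhile_suffix _).subset hj)),
        (entryStack_pairwise_gt r).sublist (List.dropWhile_suffix _).sublist⟩

theorem mem_entryStack_iff {j : ℕ} : ∀ {r : ℕ}, j ∈ entryStack d r ↔ IsSuffixMin d j r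
  | 0 => by
    simp only [entryStack, List.mem_singleton, IsSuffixMin]
    constructor
    · rintro rfl
      exact ⟨le_rfl, fun k _ hk => by rw [Nat.le_zero.1 hk]⟩
    · exact fun h => Nat.le_zero.1 h.1
  | r + 1 => by
    rw [isSuffixMin_succ_iff, entryStack, List.mem_cons]
    refine or_congr_right ⟨fun hj => ?_, fun ⟨hj, hlast⟩ => ?_⟩
    · have hjr := mem_entryStack_iff.1 ((List.dropWhile_suffix _).subset hj)
      refine ⟨hjr, ?_⟩
      obtain ⟨y, hy, hpy, rfl | hyj⟩ := (entryStack_pairwise_gt r).exists_rel_of_mem_dropWhile hj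
      · simpa using hpy
      · calc d j ≤ d y := hjr.2 y hyj.le (le_of_mem_entryStack hy)
          _ ≤ d (r + 1) := by simpa using hpy
    · exact List.mem_dropWhile_of_mem (mem_entryStack_iff.2 hj) (by simpa using hlast)

/-- Entry-node retrieval: for distinct values `d`, the index minimizing `d`
over a window `[l, r]` is exactly the smallest element `≥ l` of the stack state
after processing `r`. -/
theorem entryStack_window_min (d : ℕ → ℝ) (hd : Function.Injective d)
    (l r j : ℕ) (hlj : l ≤ j) (hjr : j ≤ r)
    (hmin : ∀ k, l ≤ k → k ≤ r → d j ≤ d k) :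
    j ∈ entryStack d r ∧ ∀ j' ∈ entryStack d r, l ≤ j' → j ≤ j' := by
  refine ⟨mem_entryStack_iff.2 ⟨hjr, fun k hjk hkr => hmin k (hlj.trans hjk) hkr⟩,
    fun j' hj' hlj' => ?_⟩
  obtain ⟨hj'r, hj'min⟩ := mem_entryStack_iff.1 hj'
  by_contra! hlt
  exact hlt.ne' (hd (le_antisymm (hmin j' hlj' hj'r) (hj'min j hlt.le hjr)))
end

section
/- In the full RRNG pruning semantics, an edge and its pruning witness interact consistently under induction on distance: if all node pairs at distance smaller than δ(x,y) have identical edge status in the induced subgraph G[I] and in the RRNG H[I] built directly on the in-range nodes, then the pair (x,y) (with x,y in range I) also has identical status in G[I] and H[I]. Key step: any witness z for (x,y) satisfies x.a < z.a < y.a, hence z is automatically in range I whenever x and y are. -/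
def IsRRNGOn {V : Type*} (δ : V → V → ℝ) (a : V → ℝ) (W : Set V)
    (E : V → V → Prop) : Prop :=
  (∀ x y, E x y ↔ E y x) ∧
  (∀ ⦃x y⦄, E x y → x ∈ W ∧ y ∈ W) ∧
  ∀ x ∈ W, ∀ y ∈ W, a x < a y →
    (E x y ↔ ¬ ∃ z ∈ W, E x z ∧ δ x z < δ x y ∧ δ y z < δ x y ∧
        a x < a z ∧ a z < a y)

/-- Inductive step of the hereditary-property proof: if all in-range pairs at
distance smaller than `dist x y` have identical edge status in the induced
subgraph of the full RRNG `E` and in the RRNG `H` built directly on the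
in-range nodes, then so does the pair `(x, y)`.  Moreover, any potential
witness attribute strictly between `a x` and `a y` automatically lies in the
range. -/
theorem hereditary_inductive_step {V : Type*} [MetricSpace V] [Fintype V]
    (a : V → ℝ) (ha : Function.Injective a)
    (hδ : DistinctDistances (fun u v : V => dist u v))
    (al ar : ℝ) (E H : V → V → Prop)
    (hE : IsRRNGOn (fun u v : V => dist u v) a Set.univ E)
    (hH : IsRRNGOn (fun u v : V => dist u v) a {v | a v ∈ Set.Icc al ar} H)
    (x y : V) (hx : a x ∈ Set.Icc al ar) (hy : a y ∈ Set.Icc al ar)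
    (hxy : a x < a y)
    (hind : ∀ u v : V, a u ∈ Set.Icc al ar → a v ∈ Set.Icc al ar →
      dist u v < dist x y → (E u v ↔ H u v)) :
    (E x y ↔ H x y) ∧
    (∀ z : V, a x < a z → a z < a y → a z ∈ Set.Icc al ar) := by
  have hrange : ∀ z : V, a x < a z → a z < a y → a z ∈ Set.Icc al ar := by
    intro z h1 h2
    exact ⟨le_trans hx.1 h1.le, le_trans h2.le hy.2⟩
  refine ⟨?_, hrange⟩
  obtain ⟨hEsym, hEdom, hErule⟩ := hE
  obtain ⟨hHsym, hHdom, hHrule⟩ := hH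
  rw [hErule x trivial y trivial hxy, hHrule x hx y hy hxy]
  constructor
  · intro h1 h2
    apply h1
    obtain ⟨z, hzW, hEz, hd1, hd2, ha1, ha2⟩ := h2
    exact ⟨z, Set.mem_univ z, (hind x z hx (hrange z ha1 ha2) hd1).mpr hEz,
      hd1, hd2, ha1, ha2⟩
  · intro h1 h2
    apply h1
    obtain ⟨z, _, hEz, hd1, hd2, ha1, ha2⟩ := h2
    exact ⟨z, hrange z ha1 ha2, (hind x z hx (hrange z ha1 ha2) hd1).mp hEz,
      hd1, hd2, ha1, ha2⟩
end

section
/- Suppose for every node z whose distance to a fixed target q is strictly less than δ(x, q) there exists a strictly distance-decreasing path from z to q, and suppose the edge (x, q) is absent from the RRNG. Then there exists r with (x, r) an RRNG edge, δ(r, q) < δ(x, q) and δ(x, r) < δ(x, q), and concatenating (x, r) with a strictly decreasing path from r to q gives a strictly distance-decreasing path from x to q. -/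
/-- RRNG with the symmetric-witness formulation used in the searchability
proof: an edge `(x,q)` is absent iff some retained edge `(x,r)` satisfies
`δ(x,r) < δ(x,q)`, `δ(q,r) < δ(x,q)` and `a r` strictly between `a x` and
`a q`. -/
def IsRRNGSym {V : Type*} (δ : V → V → ℝ) (a : V → ℝ) (E : V → V → Prop) :
    Prop :=
  ∀ x q : V, x ≠ q →
    (E x q ↔ ¬ ∃ r, E x r ∧ δ x r < δ x q ∧ δ q r < δ x q ∧
      ((a x < a r ∧ a r < a q) ∨ (a q < a r ∧ a r < a x)))

/-- Inductive step of the monotonic-searchability proof: if every node closer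
to the target `q` than `x` already has a strictly distance-decreasing path to
`q`, and the edge `(x,q)` is absent from the RRNG, then there is a retained
edge `(x,r)` with `δ(r,q) < δ(x,q)` and `δ(x,r) < δ(x,q)` whose concatenation
with a decreasing path from `r` yields a strictly distance-decreasing path
from `x` to `q`. -/
theorem searchability_inductive_step {V : Type*} [MetricSpace V] [Fintype V]
    (a : V → ℝ) (ha : Function.Injective a)
    (hδ : DistinctDistances (fun u v : V => dist u v))
    (E : V → V → Prop) (hE : IsRRNGSym (fun u v : V => dist u v) a E)
    (x q : V) (hxq : x ≠ q) (hnotE : ¬ E x q)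
    (hind : ∀ z : V, dist z q < dist x q →
      ∃ (m : ℕ) (v : ℕ → V), v 0 = z ∧ v m = q ∧
        (∀ i < m, E (v i) (v (i + 1))) ∧
        (∀ i < m, dist (v (i + 1)) q < dist (v i) q)) :
    ∃ r : V, E x r ∧ dist r q < dist x q ∧ dist x r < dist x q ∧
      ∃ (m : ℕ) (v : ℕ → V), v 0 = x ∧ v 1 = r ∧ v m = q ∧
        (∀ i < m, E (v i) (v (i + 1))) ∧
        (∀ i < m, dist (v (i + 1)) q < dist (v i) q) := by
  have h := not_not.mp ((hE x q hxq).not.mp hnotE)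
  obtain ⟨r, hEr, hxr, hqr, -⟩ := h
  have hrq : dist r q < dist x q := by simpa [dist_comm] using hqr
  obtain ⟨m, v, hv0, hvm, hedge, hdec⟩ := hind r hrq
  refine ⟨r, hEr, hrq, hxr, m + 1, fun i => if i = 0 then x else v (i - 1),
    rfl, by simpa using hv0, by simpa using hvm, ?_, ?_⟩
  · intro i hi
    rcases Nat.eq_zero_or_pos i with h0 | h0
    · subst h0; simpa [hv0] using hEr
    · have : i - 1 < m := by omega
      have he := hedge _ this
      have hne : i ≠ 0 := by omega
      simpa [hne, show i + 1 - 1 = i - 1 + 1 from by omega] using he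
  · intro i hi
    rcases Nat.eq_zero_or_pos i with h0 | h0
    · subst h0; simpa [hv0] using hrq
    · have : i - 1 < m := by omega
      have hd := hdec _ this
      have hne : i ≠ 0 := by omega
      simpa [hne, show i + 1 - 1 = i - 1 + 1 from by omega] using hd
end

section
/- In the MRNG (where the pruning witness needs no attribute condition), the hereditary property fails: there exists a finite point set with attributes and an attribute interval I such that the subgraph of the MRNG induced by the in-range points is not equal to the MRNG built directly on the in-range points (in particular, the induced subgraph can be disconnected while the direct MRNG is connected). -/
/-- MRNG edge on the vertex subset `W`: `x, y ∈ W` are joined iff no third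
node of `W` is closer to both endpoints. -/
def MRNGEdgeOn {V : Type*} (δ : V → V → ℝ) (W : Set V) (x y : V) : Prop :=
  x ∈ W ∧ y ∈ W ∧ x ≠ y ∧ ¬ ∃ z ∈ W, δ x z < δ x y ∧ δ y z < δ x y

section MRNG

variable {V : Type*} {δ : V → V → ℝ} {W : Set V} {x y z : V}

theorem not_mrngEdgeOn_of_lt_of_lt (hz : z ∈ W) (hxz : δ x z < δ x y) (hyz : δ y z < δ x y) :
    ¬ MRNGEdgeOn δ W x y :=
  fun h => h.2.2.2 ⟨z, hz, hxz, hyz⟩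

theorem mrngEdgeOn_of_subset_pair (hsymm : δ y x = δ x y) (hx : x ∈ W) (hy : y ∈ W)
    (hxy : x ≠ y) (hW : W ⊆ {x, y}) : MRNGEdgeOn δ W x y := by
  refine ⟨hx, hy, hxy, ?_⟩
  rintro ⟨z, hz, hxz, hyz⟩
  rcases hW hz with rfl | rfl
  · exact hyz.ne hsymm
  · exact hxz.ne rfl

end MRNG

theorem distinctDistances_fin_three {δ : Fin 3 → Fin 3 → ℝ} (hsymm : ∀ i j, δ i j = δ j i)
    (h01_02 : δ 0 1 ≠ δ 0 2) (h01_12 : δ 0 1 ≠ δ 1 2) (h02_12 : δ 0 2 ≠ δ 1 2) :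
    DistinctDistances δ := by
  have h10 := hsymm 1 0; have h20 := hsymm 2 0; have h21 := hsymm 2 1
  clear hsymm
  intro x y z w hxy hzw h
  fin_cases x <;> fin_cases y <;> fin_cases z <;> fin_cases w <;> simp_all

/-- The hereditary property fails for the MRNG: there is a finite attributed
point set (with distinct pairwise distances and distinct attributes) and an
attribute interval such that the subgraph of the MRNG induced by the in-range
points differs from the MRNG built directly on the in-range points. -/
theorem mrng_hereditary_fails :
    ∃ (n : ℕ) (p : Fin n → EuclideanSpace ℝ (Fin 2)) (a : Fin n → ℝ)
      (al ar : ℝ),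
      DistinctDistances (fun i j : Fin n => dist (p i) (p j)) ∧
      Function.Injective a ∧
      ¬ (∀ x y : Fin n, a x ∈ Set.Icc al ar → a y ∈ Set.Icc al ar →
          (MRNGEdgeOn (fun i j : Fin n => dist (p i) (p j)) Set.univ x y ↔
           MRNGEdgeOn (fun i j : Fin n => dist (p i) (p j))
             {i | a i ∈ Set.Icc al ar} x y)) := by
  let line := LinearIsometry.toSpanSingleton ℝ (EuclideanSpace ℝ (Fin 2))
    (v := EuclideanSpace.single 0 1) (by simp)
  let p : Fin 3 → EuclideanSpace ℝ (Fin 2) := fun i => line (![0, 3, 1] i)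
  have hdist : ∀ i j, dist (p i) (p j) = |![0, 3, 1] i - ![0, 3, 1] j| := fun i j => by
    rw [line.dist_map, Real.dist_eq]
  have d01 : dist (p 0) (p 1) = 3 := by norm_num [hdist]
  have d02 : dist (p 0) (p 2) = 1 := by norm_num [hdist, Matrix.cons_val_two]
  have d12 : dist (p 1) (p 2) = 2 := by norm_num [hdist, Matrix.cons_val_two]
  refine ⟨3, p, fun i => ((i : ℕ) : ℝ), 0, 1, ?_, ?_, ?_⟩
  · apply distinctDistances_fin_three (fun i j => dist_comm _ _) <;> norm_num [d01, d02, d12]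
  · exact Nat.cast_injective.comp Fin.val_injective
  · intro hereditary
    have hedge := (hereditary 0 1 (by norm_num) (by norm_num)).mpr <|
      mrngEdgeOn_of_subset_pair (dist_comm _ _) (by norm_num) (by norm_num) (by decide)
        fun i hi => by fin_cases i <;> simp_all
    exact not_mrngEdgeOn_of_lt_of_lt (z := 2) (Set.mem_univ _) (by norm_num [d01, d02])
      (by norm_num [d01, d12]) hedge
end
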